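/- arXiv:2510.10837 — 8 statements merged into one kernel-verified Lean document; each statement's English description precedes it below -/
import Mathlib

section
/- Let C be a small connected category and M : C → Vect_K a functor with canonical limit-to-colimit map Ψ_M of finite rank r. Then M decomposes as a direct sum M ≅ (K_C)^r ⊕ N for some functor N : C → Vect_K whose canonical limit-to-colimit map Ψ_N is zero. -/
/-!
Choose a basis of `range Ψ_M`, lift it along `Ψ_M` to `σ : K^r → lim M`, and extend its
coordinate map to `q : colim M → K^r`, so that `q ∘ Ψ_M ∘ σ = id` and `range Ψ_M ∩ ker q = 0`.
Since `C` is connected, `σ` and `q` define a cone `K_C^r ⟶ M` and a cocone `M ⟶ K_C^r` whose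
composite is the identity, hence `M ≅ K_C^r ⊞ N` with `N` the pointwise kernel of the cocone.
As `N` is a retract of `M`, `Ψ_N` vanishes once its image in `colim M` does, and that image lies
in `range Ψ_M ∩ ker q`.
-/

open CategoryTheory CategoryTheory.Limits

universe v

section LimitToColimit

variable {J D : Type*} [Category J] [Category D]

theorem limit_π_comp_colimit_ι_eq_of_isPreconnected [IsPreconnected J] (F : J ⥤ D)
    [HasLimit F] [HasColimit F] (j j' : J) :
    limit.π F j ≫ colimit.ι F j = limit.π F j' ≫ colimit.ι F j' :=
  nat_trans_from_is_connected ((limit.cone F).π ≫ (colimit.cocone F).ι) j j'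

theorem limit_π_comp_colimit_ι_eq_zero_of_retraction [HasZeroMorphisms D] {F G : J ⥤ D}
    [HasLimit F] [HasColimit F] [HasLimit G] [HasColimit G] (i : F ⟶ G) (r : G ⟶ F)
    (hir : i ≫ r = 𝟙 F) (j : J) (h : limMap i ≫ limit.π G j ≫ colimit.ι G j = 0) :
    limit.π F j ≫ colimit.ι F j = 0 := by
  have hret : colimMap i ≫ colimMap r = 𝟙 (colimit F) := by
    ext; simp [← NatTrans.comp_app_assoc, hir]
  calc limit.π F j ≫ colimit.ι F j
      = limit.π F j ≫ colimit.ι F j ≫ colimMap i ≫ colimMap r := by rw [hret, Category.comp_id]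
    _ = (limMap i ≫ limit.π G j ≫ colimit.ι G j) ≫ colimMap r := by simp
    _ = 0 := by rw [h, zero_comp]

end LimitToColimit

theorem LinearMap.exists_comp_comp_eq_id_disjoint_range_ker {K X Y : Type*} [DivisionRing K]
    [AddCommGroup X] [Module K X] [AddCommGroup Y] [Module K Y] (f : X →ₗ[K] Y)
    [FiniteDimensional K (range f)] {r : ℕ} (hr : Module.finrank K (range f) = r) :
    ∃ (σ : (Fin r → K) →ₗ[K] X) (q : Y →ₗ[K] (Fin r → K)),
      q ∘ₗ f ∘ₗ σ = LinearMap.id ∧ Disjoint (range f) (ker q) := by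
  let e : (Fin r → K) ≃ₗ[K] range f := LinearEquiv.ofFinrankEq _ _ (by simp [hr])
  let j : (Fin r → K) →ₗ[K] Y := (range f).subtype ∘ₗ e
  obtain ⟨s, hs⟩ := f.rangeRestrict.exists_rightInverse_of_surjective f.range_rangeRestrict
  obtain ⟨q, hq⟩ :=
    j.exists_leftInverse_of_injective (by simp [j, LinearMap.ker_comp_of_ker_eq_bot])
  have hfs : f ∘ₗ s ∘ₗ e.toLinearMap = j :=
    LinearMap.ext fun v => congr_arg Subtype.val (LinearMap.congr_fun hs (e v))
  refine ⟨s ∘ₗ e, q, by rw [hfs, hq], Submodule.disjoint_def.mpr fun y hy hqy => ?_⟩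
  have hy' : y = j (e.symm ⟨y, hy⟩) := by simp [j]
  rw [mem_ker, hy', ← LinearMap.comp_apply, hq, LinearMap.id_apply] at hqy
  rw [hy', hqy, map_zero]

namespace ModuleCat

section KernelSubfunctor

variable {R : Type*} [Ring R] {C : Type*} [Category C] {M F : C ⥤ ModuleCat.{v} R}

def kernelSubfunctor (p : M ⟶ F) : C ⥤ ModuleCat.{v} R where
  obj d := of R (LinearMap.ker (p.app d).hom)
  map {d d'} f := ofHom <| (M.map f).hom.restrict fun x (hx : p.app d x = 0) => by
    change p.app d' (M.map f x) = 0
    rw [← ConcreteCategory.comp_apply, p.naturality, ConcreteCategory.comp_apply, hx, map_zero]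
  map_id d := by ext x; exact congr_arg (fun g => g x.1) (M.map_id d)
  map_comp f g := by ext x; exact congr_arg (fun h => h x.1) (M.map_comp f g)

namespace kernelSubfunctor

variable (p : M ⟶ F)

def ι : kernelSubfunctor p ⟶ M where
  app d := ofHom (LinearMap.ker (p.app d).hom).subtype

@[simp]
theorem ι_comp : ι p ≫ p = 0 := by
  ext d x
  exact x.2

instance : Mono (ι p) :=
  have (d : C) : Mono ((ι p).app d) := (mono_iff_injective _).mpr Subtype.val_injective
  NatTrans.mono_of_mono_app _

def lift {L : C ⥤ ModuleCat.{v} R} (g : L ⟶ M) (hg : g ≫ p = 0) : L ⟶ kernelSubfunctor p where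
  app d := ofHom <| (g.app d).hom.codRestrict _ fun x => by
    change (g ≫ p).app d x = 0
    rw [hg]; rfl
  naturality d d' f := by
    ext x
    exact Subtype.ext (congr_arg (fun h => h x) (g.naturality f))

@[simp]
theorem lift_ι {L : C ⥤ ModuleCat.{v} R} (g : L ⟶ M) (hg : g ≫ p = 0) : lift p g hg ≫ ι p = g :=
  rfl

def splitting (i : F ⟶ M) (hip : i ≫ p = 𝟙 F) :
    (ShortComplex.mk (ι p) p (ι_comp p)).Splitting where
  r := lift p (𝟙 M - p ≫ i) (by simp [hip])
  s := i
  f_r := by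
    rw [← cancel_mono (ι p), Category.assoc, lift_ι, Preadditive.comp_sub, Category.comp_id,
      ← Category.assoc, ι_comp, zero_comp, sub_zero, Category.id_comp]
  s_g := hip
  id := by simp

end kernelSubfunctor

end KernelSubfunctor

variable {R : Type*} [Ring R] {C : Type v} [SmallCategory C] [IsPreconnected C]

theorem exists_iso_const_biprod_of_retract_limit_colimit (M : C ⥤ ModuleCat.{v} R)
    (V : ModuleCat.{v} R) (c : C) (σ : V ⟶ limit M)
    (q : colimit M ⟶ V) (hσq : σ ≫ limit.π M c ≫ colimit.ι M c ≫ q = 𝟙 V)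
    (hdisj : Disjoint (LinearMap.range (limit.π M c ≫ colimit.ι M c).hom)
      (LinearMap.ker q.hom)) :
    ∃ N : C ⥤ ModuleCat.{v} R,
      (∀ d : C, limit.π N d ≫ colimit.ι N d = 0) ∧
      Nonempty (M ≅ (Functor.const C).obj V ⊞ N) := by
  have hΨ (d : C) := limit_π_comp_colimit_ι_eq_of_isPreconnected M d c
  let i : (Functor.const C).obj V ⟶ M := (Functor.const C).map σ ≫ (limit.cone M).π
  let p : M ⟶ (Functor.const C).obj V := (colimit.cocone M).ι ≫ (Functor.const C).map q
  have hip : i ≫ p = 𝟙 _ := by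
    ext d : 2
    simpa [i, p, reassoc_of% hΨ d] using hσq
  let S := kernelSubfunctor.splitting p i hip
  refine ⟨kernelSubfunctor p, fun d => ?_, ⟨S.isoBinaryBiproduct ≪≫ biprod.braiding _ _⟩⟩
  refine limit_π_comp_colimit_ι_eq_zero_of_retraction _ S.r S.f_r d ?_
  have hker : limMap (kernelSubfunctor.ι p) ≫ limit.π M d ≫ colimit.ι M d ≫ q = 0 := by
    change limMap (kernelSubfunctor.ι p) ≫ limit.π M d ≫ p.app d = 0
    rw [limMap_π_assoc, ← NatTrans.comp_app, kernelSubfunctor.ι_comp, NatTrans.app_zero,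
      comp_zero]
  ext y
  refine (Submodule.disjoint_def.mp hdisj) _ ?_ ?_
  · rw [← hΨ d]
    exact LinearMap.mem_range_self _ _
  · exact congr_arg (fun g => g.hom y) hker

end ModuleCat

/-- Let `C` be a small connected category and `M : C ⥤ Vect_K` with canonical
limit-to-colimit map `Ψ_M` of finite rank `r`. Then `M ≅ (K_C)^r ⊕ N` for some functor `N`
whose canonical limit-to-colimit map is zero. Here `(K_C)^r` is the constant functor at `K^r`. -/
theorem decomposition_by_generalized_rank (K : Type) [Field K] (C : Type) [SmallCategory C]
    [IsConnected C] (M : C ⥤ ModuleCat K) (c : C) (r : ℕ)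
    (hfin : FiniteDimensional K (LinearMap.range (limit.π M c ≫ colimit.ι M c).hom))
    (hr : Module.finrank K (LinearMap.range (limit.π M c ≫ colimit.ι M c).hom) = r) :
    ∃ N : C ⥤ ModuleCat K,
      (∀ d : C, limit.π N d ≫ colimit.ι N d = 0) ∧
      Nonempty (M ≅ (Functor.const C).obj (ModuleCat.of K (Fin r → K)) ⊞ N) := by
  obtain ⟨σ, q, hσq, hdisj⟩ :=
    (limit.π M c ≫ colimit.ι M c).hom.exists_comp_comp_eq_id_disjoint_range_ker hr
  exact ModuleCat.exists_iso_const_biprod_of_retract_limit_colimit M _ c (ModuleCat.ofHom σ)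
    (ModuleCat.ofHom q) (ModuleCat.hom_ext hσq) hdisj
end

section
/- Let C be a small connected category and M : C → vect_K an indecomposable pointwise finite-dimensional functor. Then the canonical limit-to-colimit map Ψ_M is nonzero if and only if M is isomorphic to the constant functor K_C. -/
/-!
Over a connected category, `limit.π F c ≫ colimit.ι F c` does not depend on `c`. Hence a
factorisation `u ≫ (limit.π F c ≫ colimit.ι F c) ≫ v = 𝟙 X` assembles into a natural
transformation `const X ⟶ F` together with a retraction, and conversely. Over a field, such a
factorisation through `K` exists exactly when the map is nonzero (pick `x` with nonzero image
and a functional sending that image to `1`). A split copy of the constant functor `K_C` is a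
biproduct summand of `M`, so for indecomposable `M` it is all of `M`.
-/

open CategoryTheory CategoryTheory.Limits

namespace CategoryTheory.Limits

variable {C D : Type*} [Category C] [Category D]

section LimitToColimit

variable (F : C ⥤ D) [HasLimit F] [HasColimit F]

theorem limit_π_comp_colimit_ι_eq [IsPreconnected C] (a b : C) :
    limit.π F a ≫ colimit.ι F a = limit.π F b ≫ colimit.ι F b :=
  constant_of_preserves_morphisms (fun j => limit.π F j ≫ colimit.ι F j)
    (fun _ _ f => by rw [← colimit.w F f, ← Category.assoc, limit.w]) a b

theorem exists_isSplitMono_const_iff [IsPreconnected C] (X : D) (c : C) :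
    (∃ α : (Functor.const C).obj X ⟶ F, IsSplitMono α) ↔
      ∃ (u : X ⟶ limit F) (v : colimit F ⟶ X),
        u ≫ (limit.π F c ≫ colimit.ι F c) ≫ v = 𝟙 X := by
  constructor
  · rintro ⟨α, _⟩
    refine ⟨limit.lift F ⟨X, α⟩, colimit.desc F ⟨X, retraction α⟩, ?_⟩
    simp only [Category.assoc, colimit.ι_desc, limit.lift_π_assoc]
    exact congr_app (IsSplitMono.id α) c
  · rintro ⟨u, v, huv⟩
    refine ⟨(Functor.const C).map u ≫ (limit.cone F).π,
      IsSplitMono.mk' ⟨(colimit.cocone F).ι ≫ (Functor.const C).map v, ?_⟩⟩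
    ext j
    rw [← limit_π_comp_colimit_ι_eq F j c] at huv
    simpa using huv

end LimitToColimit

theorem nonempty_iso_of_isSplitMono_of_indecomposable [Preadditive D] [HasBinaryBiproducts D]
    {X Y : D} (hY : ∀ A B : D, Nonempty (Y ≅ A ⊞ B) → IsZero A ∨ IsZero B) (hX : ¬ IsZero X)
    (f : X ⟶ Y) [IsSplitMono f] [HasCokernel f] : Nonempty (Y ≅ X) := by
  let e : Y ≅ X ⊞ cokernel f :=
    biprod.uniqueUpToIso _ _ (isBilimitBinaryBiconeOfIsSplitMonoOfCokernel (cokernelIsCokernel f))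
  exact (hY _ _ ⟨e⟩).elim (fun h => (hX h).elim) fun h => ⟨e ≪≫ (isoBiprodZero h).symm⟩

end CategoryTheory.Limits

theorem ModuleCat.exists_comp_comp_eq_id_iff_ne_zero {K : Type*} [Field K] {V W : ModuleCat K}
    (g : V ⟶ W) :
    (∃ (u : ModuleCat.of K K ⟶ V) (v : W ⟶ ModuleCat.of K K), u ≫ g ≫ v = 𝟙 _) ↔ g ≠ 0 := by
  constructor
  · rintro ⟨u, v, huv⟩ rfl
    have : IsZero (ModuleCat.of K K) := by
      rw [IsZero.iff_id_eq_zero, ← huv, zero_comp, comp_zero]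
    exact not_subsingleton K (ModuleCat.isZero_of_iff_subsingleton.mp this)
  · intro hg
    obtain ⟨x, hx⟩ : ∃ x, g x ≠ 0 := by
      by_contra! h
      exact hg (ModuleCat.hom_ext (LinearMap.ext h))
    obtain ⟨φ, hφ⟩ := Module.Projective.exists_dual_eq_one K hx
    refine ⟨ModuleCat.ofHom (LinearMap.toSpanSingleton K V x), ModuleCat.ofHom φ, ?_⟩
    ext
    simpa using hφ

theorem indecomposable_nonzero_rank_iff_const_general (K : Type) [Field K] (C : Type) [SmallCategory C]
    [IsConnected C] (M : C ⥤ ModuleCat K)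
    (hind : ∀ A B : C ⥤ ModuleCat K, Nonempty (M ≅ A ⊞ B) →
      Limits.IsZero A ∨ Limits.IsZero B)
    (c : C) :
    limit.π M c ≫ colimit.ι M c ≠ 0 ↔
      Nonempty (M ≅ (Functor.const C).obj (ModuleCat.of K K)) := by
  have hK : ¬ IsZero ((Functor.const C).obj (ModuleCat.of K K)) := fun h =>
    not_subsingleton K (ModuleCat.isZero_of_iff_subsingleton.mp ((Functor.isZero_iff _).mp h c))
  rw [← ModuleCat.exists_comp_comp_eq_id_iff_ne_zero, ← exists_isSplitMono_const_iff M _ c]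
  constructor
  · rintro ⟨α, _⟩
    exact nonempty_iso_of_isSplitMono_of_indecomposable hind hK α
  · rintro ⟨e⟩
    exact ⟨e.inv, inferInstance⟩

/-- Let `C` be a small connected category and `M : C ⥤ vect_K` indecomposable
(pointwise finite-dimensional). Then the canonical limit-to-colimit map `Ψ_M` is nonzero if
and only if `M` is isomorphic to the constant functor `K_C`. -/
theorem indecomposable_nonzero_rank_iff_const (K : Type) [Field K] (C : Type) [SmallCategory C]
    [IsConnected C] (M : C ⥤ ModuleCat K)
    (hfd : ∀ c : C, FiniteDimensional K (M.obj c))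
    (hind : ∀ A B : C ⥤ ModuleCat K, Nonempty (M ≅ A ⊞ B) →
      Limits.IsZero A ∨ Limits.IsZero B)
    (c : C) :
    limit.π M c ≫ colimit.ι M c ≠ 0 ↔
      Nonempty (M ≅ (Functor.const C).obj (ModuleCat.of K K)) :=
  indecomposable_nonzero_rank_iff_const_general K C M hind c
end

section
/- Let F : J → C be a functor between small categories where C has finite hom-sets. If for every functor M : C → vect_K the colimit of M ∘ F is isomorphic to the colimit of M, then F is a final functor. -/
/-!
For `d : C` take `M = K[Hom(d, -)]`, pointwise finite-dimensional since hom-sets are finite.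
The free-module functor is a left adjoint, so `colim (M ∘ F)` is free on
`colim Hom(d, F -) = π₀(d / F)` and `colim M` is free on `colim Hom(d, -) = *`. Comparing
dimensions, `d / F` has exactly one connected component.
-/

open CategoryTheory CategoryTheory.Limits Opposite

universe u

lemma ModuleCat.nonempty_equiv_of_free_iso {R : Type u} [Ring R] [StrongRankCondition R]
    {X Y : Type u} (e : (free R).obj X ≅ (free R).obj Y) : Nonempty (X ≃ Y) := by
  have hrank : Module.rank R (X →₀ R) = Module.rank R (Y →₀ R) := e.toLinearEquiv.rank_eq
  rw [rank_finsupp_self, rank_finsupp_self, Cardinal.lift_id, Cardinal.lift_id] at hrank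
  exact Cardinal.eq.mp hrank

lemma nonempty_colimit_comp_equiv_of_free_iso (R : Type u) [Ring R] [StrongRankCondition R]
    {J C : Type u} [SmallCategory J] [SmallCategory C] (F : J ⥤ C) (G : C ⥤ Type u)
    (e : colimit (F ⋙ G ⋙ ModuleCat.free R) ≅ colimit (G ⋙ ModuleCat.free R)) :
    Nonempty (colimit (F ⋙ G) ≃ colimit G) :=
  have := (ModuleCat.adj R).leftAdjoint_preservesColimits
  ModuleCat.nonempty_equiv_of_free_iso <|
    preservesColimitIso (ModuleCat.free R) (F ⋙ G) ≪≫
      HasColimit.isoOfNatIso (F.associator G _) ≪≫ e ≪≫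
      (preservesColimitIso (ModuleCat.free R) G).symm

/-- Let `F : J ⥤ C` be a functor between small categories where `C` has finite
hom-sets. If for every pointwise finite-dimensional functor `M : C ⥤ vect_K` the colimit of
`M ∘ F` is isomorphic to the colimit of `M`, then `F` is final. -/
theorem final_of_colimit_preserving (K : Type) [Field K] {J C : Type} [SmallCategory J]
    [SmallCategory C] [∀ c c' : C, Finite (c ⟶ c')] (F : J ⥤ C)
    (h : ∀ M : C ⥤ ModuleCat K, (∀ c : C, FiniteDimensional K (M.obj c)) →
      Nonempty (colimit (F ⋙ M) ≅ colimit M)) :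
    F.Final := by
  refine Functor.final_of_colimit_comp_coyoneda_iso_pUnit F fun d => ?_
  have hfree := h (coyoneda.obj (op d) ⋙ ModuleCat.free K) fun c =>
    inferInstanceAs (FiniteDimensional K ((d ⟶ c) →₀ K))
  exact (nonempty_colimit_comp_equiv_of_free_iso K F _ hfree.some).some.toIso ≪≫
    Coyoneda.colimitCoyonedaIso (op d)
end

section
/- Let F : J → C be a functor between small categories where C has finite hom-sets. If for every functor M : C → vect_K the limit of M ∘ F is isomorphic to the limit of M, then F is an initial functor. -/
/-!
For `c : C` let `M_c = K^{Hom(-, c)}`, finite-dimensional because the hom-sets are finite. A cone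
over `F ⋙ M_c` with vertex `V` is a linear map `V → K` for each object of `F/c`, compatible along
morphisms, so `lim (F ⋙ M_c) = K^{π₀(F/c)}`. For `F = 𝟭` the comma category has a terminal object,
so `lim M_c = K`. Comparing dimensions, `π₀(F/c)` is a single point, i.e. `F/c` is connected.
-/

open CategoryTheory CategoryTheory.Limits

theorem Nat.card_eq_of_linearEquiv_fun {K X Y : Type*} [Field K] [Finite Y]
    (e : (X → K) ≃ₗ[K] (Y → K)) : Nat.card X = Nat.card Y := by
  classical
  have : Module.Finite K (X → K) := Module.Finite.equiv e.symm
  have : Finite X := (Pi.linearIndependent_single_one X K).finite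
  have := Fintype.ofFinite X
  have := Fintype.ofFinite Y
  simpa [Nat.card_eq_fintype_card] using e.finrank_eq

theorem isConnected_iff_natCard_connectedComponents_eq_one {J : Type*} [Category J] :
    IsConnected J ↔ Nat.card (ConnectedComponents J) = 1 := by
  rw [Nat.card_eq_one_iff_unique]
  constructor
  · intro _
    exact ⟨⟨Quotient.ind₂ fun a b => Quotient.sound (isPreconnected_zigzag a b)⟩,
      ⟨⟦Classical.arbitrary J⟧⟩⟩
  · rintro ⟨_, ⟨q⟩⟩
    obtain ⟨j, -⟩ := Quotient.exists_rep q
    have : Nonempty J := ⟨j⟩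
    exact zigzag_isConnected fun a b =>
      Quotient.exact (Subsingleton.elim (α := ConnectedComponents J) ⟦a⟧ ⟦b⟧)

theorem CategoryTheory.Zigzag.eq_of_forall_hom {J α : Type*} [Category J] (f : J → α)
    (hf : ∀ {a b : J}, (a ⟶ b) → f a = f b) {a b : J} (h : Zigzag a b) : f a = f b := by
  induction h with
  | refl => rfl
  | tail _ hz ih => exact ih.trans (hz.elim (fun ⟨g⟩ => hf g) fun ⟨g⟩ => (hf g).symm)

section DualYoneda

variable (K : Type) [Field K] {J C : Type} [SmallCategory J] [SmallCategory C]

def dualYoneda (c : C) : C ⥤ ModuleCat K where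
  obj c' := ModuleCat.of K ((c' ⟶ c) → K)
  map f := ModuleCat.ofHom (LinearMap.funLeft K K (f ≫ ·))
  map_id _ := by ext; simp [LinearMap.funLeft_apply]
  map_comp _ _ := by ext; simp [LinearMap.funLeft_apply]

variable (F : J ⥤ C) (c : C)

def dualYonedaCone : Cone (F ⋙ dualYoneda K c) where
  pt := ModuleCat.of K (ConnectedComponents (CostructuredArrow F c) → K)
  π.app j := ModuleCat.ofHom (LinearMap.funLeft K K fun g => ⟦CostructuredArrow.mk g⟧)
  π.naturality j j' u := by
    ext φ
    funext g
    exact congrArg φ (Quotient.sound (Zigzag.of_inv (CostructuredArrow.homMk u rfl :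
      CostructuredArrow.mk (F.map u ≫ g) ⟶ CostructuredArrow.mk g)))

variable {K F c} in
theorem cone_dualYoneda_app_eq_of_hom (s : Cone (F ⋙ dualYoneda K c)) (x : s.pt)
    {a b : CostructuredArrow F c} (f : a ⟶ b) :
    s.π.app a.left x a.hom = s.π.app b.left x b.hom := by
  rw [← CostructuredArrow.w f]
  exact congrFun (ConcreteCategory.congr_hom (s.w f.left) x) b.hom

def dualYonedaConeIsLimit : IsLimit (dualYonedaCone K F c) where
  lift s := ModuleCat.ofHom <| LinearMap.pi <| Quotient.lift
    (fun a => LinearMap.proj a.hom ∘ₗ (s.π.app a.left).hom)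
    fun _ _ h => LinearMap.ext fun x =>
      Zigzag.eq_of_forall_hom (fun a : CostructuredArrow F c => s.π.app a.left x a.hom)
        (cone_dualYoneda_app_eq_of_hom s x) h
  fac _ _ := rfl
  uniq s m hm := by
    ext x
    funext q
    induction q using Quotient.inductionOn with
    | h a => exact congrFun (ConcreteCategory.congr_hom (hm a.left) x) a.hom

noncomputable def limitDualYonedaIso :
    limit (F ⋙ dualYoneda K c) ≅
      ModuleCat.of K (ConnectedComponents (CostructuredArrow F c) → K) :=
  limit.isoLimitCone ⟨_, dualYonedaConeIsLimit K F c⟩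

end DualYoneda

/-- Let `F : J ⥤ C` be a functor between small categories where `C` has finite
hom-sets. If for every pointwise finite-dimensional functor `M : C ⥤ vect_K` the limit of
`M ∘ F` is isomorphic to the limit of `M`, then `F` is initial. -/
theorem initial_of_limit_preserving (K : Type) [Field K] {J C : Type} [SmallCategory J]
    [SmallCategory C] [∀ c c' : C, Finite (c ⟶ c')] (F : J ⥤ C)
    (h : ∀ M : C ⥤ ModuleCat K, (∀ c : C, FiniteDimensional K (M.obj c)) →
      Nonempty (limit (F ⋙ M) ≅ limit M)) :
    F.Initial := by
  refine ⟨fun c => ?_⟩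
  obtain ⟨e⟩ := h (dualYoneda K c) fun c' =>
    inferInstanceAs (FiniteDimensional K ((c' ⟶ c) → K))
  -- `limit (𝟭 C ⋙ M)` is `limit M` on the nose
  have e' := (limitDualYonedaIso K F c).symm ≪≫ e ≪≫ limitDualYonedaIso K (𝟭 C) c
  have hid : Nat.card (ConnectedComponents (CostructuredArrow (𝟭 C) c)) = 1 :=
    isConnected_iff_natCard_connectedComponents_eq_one.mp inferInstance
  have : Finite (ConnectedComponents (CostructuredArrow (𝟭 C) c)) :=
    Nat.finite_of_card_ne_zero (by simp [hid])
  rw [isConnected_iff_natCard_connectedComponents_eq_one, ← hid]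
  exact Nat.card_eq_of_linearEquiv_fun e'.toLinearEquiv
end

section
/- A functor F : J → C between small categories (with C having finite hom-sets) is final if and only if colim(M ∘ F) ≅ colim M for all functors M : C → Vect_K. -/
open CategoryTheory CategoryTheory.Limits

/-! Testing a functor against `coyoneda.obj (op c) ⋙ free K` suffices: the free module functor
preserves colimits, and over a field the dimension of a free module recovers the cardinality of
its basis. So `colimit (F ⋙ coyoneda.obj (op c))` has the cardinality of
`colimit (coyoneda.obj (op c)) ≅ PUnit`, which is Mathlib's criterion for finality. -/

universe u

lemma ModuleCat.cardinal_mk_eq_of_free_obj_iso {R : Type u} [Ring R] [StrongRankCondition R]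
    {X Y : Type u} (e : (free R).obj X ≅ (free R).obj Y) : Cardinal.mk X = Cardinal.mk Y := by
  rw [← rank_finsupp_self' (R := R), ← rank_finsupp_self' (R := R)]
  exact e.toLinearEquiv.rank_eq

lemma cardinal_mk_colimit_eq_of_colimit_comp_free_iso {R : Type u} [Ring R]
    [StrongRankCondition R] {J C : Type u} [SmallCategory J] [SmallCategory C] (F : J ⥤ C)
    (G : C ⥤ Type u) (e : colimit (F ⋙ G ⋙ ModuleCat.free R) ≅ colimit (G ⋙ ModuleCat.free R)) :
    Cardinal.mk (colimit (F ⋙ G)) = Cardinal.mk (colimit G) := by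
  have : PreservesColimits (ModuleCat.free R) := (ModuleCat.adj R).leftAdjoint_preservesColimits
  exact ModuleCat.cardinal_mk_eq_of_free_obj_iso <|
    preservesColimitIso (ModuleCat.free R) (F ⋙ G) ≪≫ e ≪≫
      (preservesColimitIso (ModuleCat.free R) G).symm

/-- A functor `F : J ⥤ C` between small categories (with `C` having finite
hom-sets) is final if and only if `colim (M ∘ F) ≅ colim M` for all functors `M : C ⥤ Vect_K`. -/
theorem final_iff_colimit_preserving (K : Type) [Field K] {J C : Type} [SmallCategory J]
    [SmallCategory C] [∀ c c' : C, Finite (c ⟶ c')] (F : J ⥤ C) :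
    F.Final ↔ ∀ M : C ⥤ ModuleCat K, Nonempty (colimit (F ⋙ M) ≅ colimit M) := by
  refine ⟨fun _ M ↦ ⟨Functor.Final.colimitIso F M⟩, fun h ↦ ?_⟩
  refine Functor.final_of_colimit_comp_coyoneda_iso_pUnit F fun c ↦ ?_
  have e := Classical.choice (h (coyoneda.obj (Opposite.op c) ⋙ ModuleCat.free K))
  have hcard : Cardinal.mk (colimit (F ⋙ coyoneda.obj (Opposite.op c))) = Cardinal.mk PUnit :=
    (cardinal_mk_colimit_eq_of_colimit_comp_free_iso F _ e).trans
      (Cardinal.mk_congr (Coyoneda.colimitCoyonedaIso (Opposite.op c)).toEquiv)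
  exact (Classical.choice (Cardinal.eq.mp hcard)).toIso
end

section
/- Let J and C be small connected categories, C with finite hom-sets, and let F : J → C be both final and initial. Then for every functor M : C → vect_K, the rank of the canonical limit-to-colimit map of M equals the rank of the canonical limit-to-colimit map of M ∘ F; equivalently, the multiplicity of the constant functor K_C as a direct summand of M equals the multiplicity of K_J as a direct summand of M ∘ F. -/
open CategoryTheory CategoryTheory.Limits

/-!
For a connected category the composite `limit.π M c ≫ colimit.ι M c` does not depend on `c`.
Taking `c = F.obj j`, the comparison maps `limit M ≅ limit (F ⋙ M)` (as `F` is initial) and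
`colimit (F ⋙ M) ≅ colimit M` (as `F` is final) identify the canonical map of `M` with that of
`F ⋙ M`, and composing with isomorphisms does not change the rank.
-/

theorem LinearMap.finrank_range_equiv_comp_comp_equiv {R M M' N N' : Type*} [Ring R]
    [AddCommGroup M] [Module R M] [AddCommGroup M'] [Module R M'] [AddCommGroup N] [Module R N]
    [AddCommGroup N'] [Module R N'] (e : M' ≃ₗ[R] M) (f : M →ₗ[R] N) (e' : N ≃ₗ[R] N') :
    Module.finrank R (LinearMap.range ((e' : N →ₗ[R] N') ∘ₗ f ∘ₗ (e : M' →ₗ[R] M))) =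
      Module.finrank R (LinearMap.range f) := by
  rw [LinearMap.range_comp, LinearMap.range_comp_of_range_eq_top _ (LinearEquiv.range e)]
  exact LinearEquiv.finrank_map_eq e' _

theorem ModuleCat.finrank_range_iso_hom_comp_comp_iso_hom {R : Type*} [Ring R]
    {A B A' B' : ModuleCat R} (e : A' ≅ A) (f : A ⟶ B) (e' : B ≅ B') :
    Module.finrank R (LinearMap.range (e.hom ≫ f ≫ e'.hom).hom) =
      Module.finrank R (LinearMap.range f.hom) :=
  LinearMap.finrank_range_equiv_comp_comp_equiv e.toLinearEquiv f.hom e'.toLinearEquiv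

namespace CategoryTheory.Limits

variable {J C D : Type*} [Category J] [Category C] [Category D]

theorem limit_π_comp_colimit_ι_eq_s12 [IsPreconnected C] (M : C ⥤ D) [HasLimit M] [HasColimit M]
    (c c' : C) : limit.π M c ≫ colimit.ι M c = limit.π M c' ≫ colimit.ι M c' :=
  constant_of_preserves_morphisms (fun c => limit.π M c ≫ colimit.ι M c) (fun c₁ c₂ f => by
    rw [← limit.w M f, Category.assoc, colimit.w]) c c'

theorem limit_pre_comp_limit_π_comp_colimit_ι_comp_colimitIso_hom (F : J ⥤ C) [F.Final]
    (M : C ⥤ D) [HasLimit M] [HasLimit (F ⋙ M)] [HasColimit M] (j : J) :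
    limit.pre M F ≫ (limit.π (F ⋙ M) j ≫ colimit.ι (F ⋙ M) j) ≫
        (Functor.Final.colimitIso F M).hom =
      limit.π M (F.obj j) ≫ colimit.ι M (F.obj j) := by
  simp only [Category.assoc, limit.pre_π_assoc, Functor.Final.ι_colimitIso_hom]

end CategoryTheory.Limits

/-- Let `J` and `C` be small connected categories, `C` with finite hom-sets, and
`F : J ⥤ C` both final and initial. Then for every pointwise finite-dimensional functor
`M : C ⥤ vect_K`, the rank of the canonical limit-to-colimit map of `M` equals the rank of the
canonical limit-to-colimit map of `M ∘ F` (equivalently, the multiplicity of the constant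
functor `K_C` in `M` equals that of `K_J` in `M ∘ F`). -/
theorem rank_preserved_by_final_initial (K : Type) [Field K] {J C : Type} [SmallCategory J]
    [SmallCategory C] [IsConnected J] [IsConnected C] [∀ c c' : C, Finite (c ⟶ c')]
    (F : J ⥤ C) (hF : F.Final) (hF' : F.Initial)
    (M : C ⥤ ModuleCat K) (hfd : ∀ c : C, FiniteDimensional K (M.obj c))
    (c : C) (j : J) :
    Module.finrank K (LinearMap.range (limit.π M c ≫ colimit.ι M c).hom) =
      Module.finrank K (LinearMap.range (limit.π (F ⋙ M) j ≫ colimit.ι (F ⋙ M) j).hom) := by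
  rw [limit_π_comp_colimit_ι_eq_s12 M c (F.obj j),
    ← limit_pre_comp_limit_π_comp_colimit_ι_comp_colimitIso_hom F M j]
  exact ModuleCat.finrank_range_iso_hom_comp_comp_iso_hom (asIso (limit.pre M F)) _
    (Functor.Final.colimitIso F M)
end

section
/- Let P be a nonempty poset satisfying: P ⊆ ↓S for a finite S ⊆ P, and every intersection of two subsets each having maximal elements and with nonempty intersection itself has a maximal element. Define S₀ = max P and S_{n+1} = S_n ∪ max{p ∈ P : ↑p ∩ S_n is not connected}. Then the chain stabilizes: there exists ℓ ≤ #(max P) − 1 with S_ℓ = S_{ℓ+1} = S_{ℓ+2} = ⋯. -/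
/-!
Write `M = max P` and `Bₙ = {p | ↑p ∩ Sₙ is not connected}`, so that `Sₙ₊₁ = Sₙ ∪ max Bₙ`.
Every `p ∈ Bₙ` lies below at least `n + 2` elements of `M`. Indeed `Bₙ₊₁ ⊆ Bₙ`, and `Bₙ` is a
finite union, over pairs `m₁, m₂ ∈ M`, of sets of common lower bounds `y` of `m₁, m₂` that
separate them in `↑y ∩ Sₙ`; the intersection hypothesis makes each of these sets, hence `Bₙ`,
have every element below a maximal one. So `p ∈ Bₙ₊₁` lies below some `q ∈ max Bₙ`, which
has at least `n + 2` elements of `M` above it by induction. As `q ∈ Sₙ₊₁`, all of `↑q ∩ M` is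
connected through `q` in `↑p ∩ Sₙ₊₁`, so the disconnection of `↑p ∩ Sₙ₊₁` needs one more
element of `M` above `p` but not above `q`. Hence `B_{#M-1} = ∅`, after which `Sₙ` is constant.
-/

/-- A subset `T` of a poset is connected (as a full subposet) if it is nonempty and any two
of its elements are joined by a finite zigzag of comparabilities within `T`. -/
def ZigzagConnected {P : Type*} [Preorder P] (T : Set P) : Prop :=
  T.Nonempty ∧ ∀ a b : T, Relation.ReflTransGen (fun x y : T => x.1 ≤ y.1 ∨ y.1 ≤ x.1) a b

/-- The set of maximal elements of a subset `T` of a poset. -/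
def maxSet {α : Type*} [PartialOrder α] (T : Set α) : Set α :=
  {a | a ∈ T ∧ ∀ b ∈ T, a ≤ b → b = a}

/-- The recursively defined subsets: `S₀ = max P` and
`S_{n+1} = S_n ∪ max {p : ↑p ∩ S_n is not connected}`. -/
def Sseq (P : Type*) [PartialOrder P] : ℕ → Set P
  | 0 => maxSet Set.univ
  | n + 1 => Sseq P n ∪ maxSet {p | ¬ ZigzagConnected (Set.Ici p ∩ Sseq P n)}

/-- The assumptions on the poset `P`: (1) `P ⊆ ↓S` for some finite `S ⊆ P`; (2) any
intersection of two subsets, each having maximal elements and with nonempty intersection,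
itself has a maximal element. -/
def AsnFin (P : Type*) [PartialOrder P] : Prop :=
  (∃ S : Set P, S.Finite ∧ ∀ p : P, ∃ s ∈ S, p ≤ s) ∧
  (∀ A B : Set P, (A ∩ B).Nonempty → (maxSet A).Nonempty → (maxSet B).Nonempty →
    (maxSet (A ∩ B)).Nonempty)

open Set

section

variable {P : Type*} [PartialOrder P]

def ZigzagJoined (T : Set P) (a b : P) : Prop :=
  ∃ (ha : a ∈ T) (hb : b ∈ T),
    Relation.ReflTransGen (fun x y : T => x.1 ≤ y.1 ∨ y.1 ≤ x.1) ⟨a, ha⟩ ⟨b, hb⟩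

namespace ZigzagJoined

variable {T T' : Set P} {a b c : P}

theorem of_le (ha : a ∈ T) (hb : b ∈ T) (hab : a ≤ b) : ZigzagJoined T a b :=
  ⟨ha, hb, .single (.inl hab)⟩

theorem trans : ZigzagJoined T a b → ZigzagJoined T b c → ZigzagJoined T a c
  | ⟨ha, _, hab⟩, ⟨_, hc, hbc⟩ => ⟨ha, hc, hab.trans hbc⟩

theorem symm : ZigzagJoined T a b → ZigzagJoined T b a
  | ⟨ha, hb, h⟩ =>
    ⟨hb, ha, Relation.ReflTransGen.mono (fun _ _ => Or.symm) _ _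
      (Relation.ReflTransGen.swap _ _ h)⟩

theorem mono (hTT' : T ⊆ T') : ZigzagJoined T a b → ZigzagJoined T' a b
  | ⟨ha, hb, h⟩ => ⟨hTT' ha, hTT' hb,
      Relation.ReflTransGen.lift (p := fun x y : T' => x.1 ≤ y.1 ∨ y.1 ≤ x.1)
        (inclusion hTT') (fun _ _ => id) _ _ h⟩

end ZigzagJoined

theorem zigzagConnected_iff {T : Set P} :
    ZigzagConnected T ↔ T.Nonempty ∧ ∀ a ∈ T, ∀ b ∈ T, ZigzagJoined T a b :=
  and_congr_right fun _ =>
    ⟨fun h a ha b hb => ⟨ha, hb, h ⟨a, ha⟩ ⟨b, hb⟩⟩, fun h a b => (h a a.2 b b.2).2.2⟩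

def MaxDominated (A : Set P) : Prop :=
  ∀ x ∈ A, ∃ y ∈ maxSet A, x ≤ y

theorem maxDominated_Iic (m : P) : MaxDominated (Iic m) :=
  fun _ hx => ⟨m, ⟨le_rfl, fun _ hb hmb => le_antisymm hb hmb⟩, hx⟩

theorem maxDominated_Ici (hdom : MaxDominated (univ : Set P)) (p : P) :
    MaxDominated (Ici p) := fun x hx =>
  let ⟨m, hm, hxm⟩ := hdom x trivial
  ⟨m, ⟨hx.trans hxm, fun b _ hmb => hm.2 b trivial hmb⟩, hxm⟩

theorem MaxDominated.inter
    (hInter : ∀ A B : Set P, (A ∩ B).Nonempty → (maxSet A).Nonempty → (maxSet B).Nonempty →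
      (maxSet (A ∩ B)).Nonempty)
    {A B : Set P} (hA : MaxDominated A) (hB : MaxDominated B) : MaxDominated (A ∩ B) := by
  intro x hx
  -- restricted to `↑x`, the intersection hypothesis yields a maximal element above `x`
  have hmaxAbove {C : Set P} (hC : MaxDominated C) (hxC : x ∈ C) :
      (maxSet (Ici x ∩ C)).Nonempty :=
    let ⟨y, hy, hxy⟩ := hC x hxC
    ⟨y, ⟨hxy, hy.1⟩, fun b hb => hy.2 b hb.2⟩
  obtain ⟨z, ⟨⟨hxz, hzA⟩, -, hzB⟩, hz⟩ :=
    hInter (Ici x ∩ A) (Ici x ∩ B) ⟨x, ⟨le_rfl, hx.1⟩, le_rfl, hx.2⟩ (hmaxAbove hA hx.1)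
      (hmaxAbove hB hx.2)
  exact ⟨z, ⟨⟨hzA, hzB⟩, fun b hb hzb =>
    hz b ⟨⟨hxz.trans hzb, hb.1⟩, hxz.trans hzb, hb.2⟩ hzb⟩, hxz⟩

theorem MaxDominated.exists_mem_maxSet_union_of_mem_left {A B : Set P} (hA : MaxDominated A)
    (hB : MaxDominated B) {x : P} (hx : x ∈ A) : ∃ y ∈ maxSet (A ∪ B), x ≤ y := by
  obtain ⟨a, ha, hxa⟩ := hA x hx
  by_cases hamax : ∀ c ∈ A ∪ B, a ≤ c → c = a
  · exact ⟨a, ⟨.inl ha.1, hamax⟩, hxa⟩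
  push Not at hamax
  obtain ⟨c, hc, hac, hca⟩ := hamax
  have hcB : c ∈ B := hc.resolve_left fun hcA => hca (ha.2 c hcA hac)
  obtain ⟨b, hb, hcb⟩ := hB c hcB
  refine ⟨b, ⟨.inr hb.1, fun d hd hbd => ?_⟩, hxa.trans (hac.trans hcb)⟩
  rcases hd with hdA | hdB
  · -- then `a ≤ c ≤ b ≤ d = a`, so `c = a`
    have hda : d = a := ha.2 d hdA (hac.trans (hcb.trans hbd))
    exact absurd (le_antisymm (hcb.trans (hbd.trans hda.le)) hac) hca
  · exact hb.2 d hdB hbd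

theorem MaxDominated.union {A B : Set P} (hA : MaxDominated A) (hB : MaxDominated B) :
    MaxDominated (A ∪ B) := by
  rintro x (hx | hx)
  · exact hA.exists_mem_maxSet_union_of_mem_left hB hx
  · rw [union_comm]
    exact hB.exists_mem_maxSet_union_of_mem_left hA hx

theorem MaxDominated.biUnion {ι : Type*} {s : Set ι} (hs : s.Finite) {U : ι → Set P}
    (hU : ∀ i ∈ s, MaxDominated (U i)) : MaxDominated (⋃ i ∈ s, U i) := by
  induction s, hs using Set.Finite.induction_on with
  | empty => simp [MaxDominated]
  | @insert i s _ _ ih =>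
    rw [biUnion_insert]
    exact (hU i (mem_insert i s)).union (ih fun j hj => hU j (mem_insert_of_mem i hj))

theorem AsnFin.maxDominated_univ (hP : AsnFin P) : MaxDominated (univ : Set P) := by
  intro p _
  obtain ⟨S, hSfin, hS⟩ := hP.1
  obtain ⟨s, hs, hps⟩ := hS p
  obtain ⟨m, hsm, hm⟩ := hSfin.exists_le_maximal hs
  refine ⟨m, ⟨trivial, fun b _ hmb => ?_⟩, hps.trans hsm⟩
  obtain ⟨t, ht, hbt⟩ := hS b
  exact le_antisymm (hbt.trans (hm.2 ht (hmb.trans hbt))) hmb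

theorem AsnFin.finite_maxSet_univ (hP : AsnFin P) : (maxSet (univ : Set P)).Finite := by
  obtain ⟨S, hSfin, hS⟩ := hP.1
  refine hSfin.subset fun m hm => ?_
  obtain ⟨s, hs, hms⟩ := hS m
  rwa [← hm.2 s trivial hms]

theorem maxDominated_setOf_not_zigzagJoined (hP : AsnFin P) (S : Set P) (m₁ m₂ : P) :
    MaxDominated {y | y ≤ m₁ ∧ y ≤ m₂ ∧ ¬ ZigzagJoined (Ici y ∩ S) m₁ m₂} := by
  rintro x ⟨hx₁, hx₂, hx⟩
  have hdom : MaxDominated (Ici x ∩ Iic m₁ ∩ Iic m₂) :=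
    ((maxDominated_Ici hP.maxDominated_univ x).inter hP.2 (maxDominated_Iic m₁)).inter hP.2
      (maxDominated_Iic m₂)
  obtain ⟨z, ⟨⟨⟨hxz, hz₁⟩, hz₂⟩, hz⟩, -⟩ := hdom x ⟨⟨le_rfl, hx₁⟩, hx₂⟩
  refine ⟨z, ⟨⟨hz₁, hz₂, fun h => hx (h.mono ?_)⟩, fun b hb hzb => ?_⟩, hxz⟩
  · exact inter_subset_inter_left _ (Ici_subset_Ici.2 hxz)
  · exact hz b ⟨⟨hxz.trans hzb, hb.1⟩, hb.2.1⟩ hzb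

theorem ncard_Ici_inter_lt {M : Set P} (hM : M.Finite) {p q m : P} (hpq : p ≤ q)
    (hm : m ∈ Ici p ∩ M) (hqm : ¬ q ≤ m) : (Ici q ∩ M).ncard < (Ici p ∩ M).ncard :=
  ncard_lt_ncard ((ssubset_iff_of_subset (inter_subset_inter_left _ (Ici_subset_Ici.2 hpq))).2
    ⟨m, hm, fun h => hqm h.1⟩) (hM.subset inter_subset_right)

theorem zigzagConnected_Ici_inter_iff (hdom : MaxDominated (univ : Set P)) {S : Set P}
    (hS : maxSet univ ⊆ S) (p : P) :
    ZigzagConnected (Ici p ∩ S) ↔ ∀ m₁ ∈ Ici p ∩ maxSet univ, ∀ m₂ ∈ Ici p ∩ maxSet univ,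
      ZigzagJoined (Ici p ∩ S) m₁ m₂ := by
  have hjoined {a : P} (ha : a ∈ Ici p ∩ S) :
      ∃ m ∈ Ici p ∩ maxSet univ, ZigzagJoined (Ici p ∩ S) a m :=
    let ⟨m, hm, ham⟩ := hdom a trivial
    ⟨m, ⟨ha.1.trans ham, hm⟩, .of_le ha ⟨ha.1.trans ham, hS hm⟩ ham⟩
  rw [zigzagConnected_iff]
  constructor
  · rintro ⟨-, h⟩ m₁ hm₁ m₂ hm₂
    exact h m₁ ⟨hm₁.1, hS hm₁.2⟩ m₂ ⟨hm₂.1, hS hm₂.2⟩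
  · intro h
    obtain ⟨m, hm, hpm⟩ := hdom p trivial
    refine ⟨⟨m, hpm, hS hm⟩, fun a ha b hb => ?_⟩
    obtain ⟨ma, hma, hja⟩ := hjoined ha
    obtain ⟨mb, hmb, hjb⟩ := hjoined hb
    exact hja.trans ((h ma hma mb hmb).trans hjb.symm)

theorem zigzagConnected_Ici_inter_mono (hdom : MaxDominated (univ : Set P)) {S S' : Set P}
    (hS : maxSet univ ⊆ S) (hSS' : S ⊆ S') {p : P} (h : ZigzagConnected (Ici p ∩ S)) :
    ZigzagConnected (Ici p ∩ S') := by
  rw [zigzagConnected_Ici_inter_iff hdom hS] at h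
  rw [zigzagConnected_Ici_inter_iff hdom (hS.trans hSS')]
  exact fun m₁ hm₁ m₂ hm₂ => (h m₁ hm₁ m₂ hm₂).mono (inter_subset_inter_right _ hSS')

variable (P) in
/-- The set `Bₙ` of the introduction. -/
def nonconnSet (n : ℕ) : Set P :=
  {p | ¬ ZigzagConnected (Ici p ∩ Sseq P n)}

theorem Sseq_succ (n : ℕ) : Sseq P (n + 1) = Sseq P n ∪ maxSet (nonconnSet P n) := rfl

theorem maxSet_univ_subset_Sseq : ∀ n, maxSet (univ : Set P) ⊆ Sseq P n
  | 0 => subset_rfl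
  | n + 1 => (maxSet_univ_subset_Sseq n).trans subset_union_left

theorem Sseq_eq_of_nonconnSet_eq_empty {ℓ : ℕ} (h : nonconnSet P ℓ = ∅) :
    ∀ n, ℓ ≤ n → Sseq P n = Sseq P ℓ := by
  intro n hn
  induction n, hn using Nat.le_induction with
  | base => rfl
  | succ n _ ih =>
    have hn : nonconnSet P n = ∅ := by rw [nonconnSet, ih]; exact h
    rw [Sseq_succ, hn, ih]
    simp [maxSet]

theorem mem_nonconnSet_iff (hdom : MaxDominated (univ : Set P)) {n : ℕ} {p : P} :
    p ∈ nonconnSet P n ↔ ∃ m₁ ∈ Ici p ∩ maxSet univ, ∃ m₂ ∈ Ici p ∩ maxSet univ,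
      ¬ ZigzagJoined (Ici p ∩ Sseq P n) m₁ m₂ := by
  simp only [nonconnSet, mem_ofPred_eq,
    zigzagConnected_Ici_inter_iff hdom (maxSet_univ_subset_Sseq n), not_forall, exists_prop]

theorem nonconnSet_succ_subset (hdom : MaxDominated (univ : Set P)) (n : ℕ) :
    nonconnSet P (n + 1) ⊆ nonconnSet P n := fun _ hp h =>
  hp (zigzagConnected_Ici_inter_mono hdom (maxSet_univ_subset_Sseq n) subset_union_left h)

theorem maxDominated_nonconnSet (hP : AsnFin P) (n : ℕ) : MaxDominated (nonconnSet P n) := by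
  have hcover : nonconnSet P n = ⋃ m₁ ∈ maxSet univ, ⋃ m₂ ∈ maxSet univ,
      {y | y ≤ m₁ ∧ y ≤ m₂ ∧ ¬ ZigzagJoined (Ici y ∩ Sseq P n) m₁ m₂} := by
    ext p
    simp only [mem_nonconnSet_iff hP.maxDominated_univ, mem_iUnion, mem_inter_iff, mem_Ici,
      mem_ofPred_eq, exists_prop]
    exact ⟨fun ⟨m₁, ⟨h₁, hm₁⟩, m₂, ⟨h₂, hm₂⟩, hsep⟩ => ⟨m₁, hm₁, m₂, hm₂, h₁, h₂, hsep⟩,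
      fun ⟨m₁, hm₁, m₂, hm₂, h₁, h₂, hsep⟩ => ⟨m₁, ⟨h₁, hm₁⟩, m₂, ⟨h₂, hm₂⟩, hsep⟩⟩
  rw [hcover]
  exact .biUnion hP.finite_maxSet_univ fun m₁ _ => .biUnion hP.finite_maxSet_univ fun m₂ _ =>
    maxDominated_setOf_not_zigzagJoined hP _ m₁ m₂

theorem add_two_le_ncard_of_mem_nonconnSet (hP : AsnFin P) :
    ∀ {n : ℕ} {p : P}, p ∈ nonconnSet P n → n + 2 ≤ (Ici p ∩ maxSet univ).ncard
  | 0, p, hp => by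
    obtain ⟨m₁, hm₁, m₂, hm₂, hsep⟩ := (mem_nonconnSet_iff hP.maxDominated_univ).1 hp
    have hne : m₁ ≠ m₂ := by
      rintro rfl
      exact hsep (.of_le hm₁ hm₁ le_rfl)
    exact (one_lt_ncard_iff (hP.finite_maxSet_univ.subset inter_subset_right)).2
      ⟨m₁, m₂, hm₁, hm₂, hne⟩
  | n + 1, p, hp => by
    obtain ⟨q, hq, hpq⟩ :=
      maxDominated_nonconnSet hP n p (nonconnSet_succ_subset hP.maxDominated_univ n hp)
    obtain ⟨m₁, hm₁, m₂, hm₂, hsep⟩ := (mem_nonconnSet_iff hP.maxDominated_univ).1 hp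
    have hqS : q ∈ Ici p ∩ Sseq P (n + 1) := ⟨hpq, .inr hq⟩
    have hmS {m : P} (hm : m ∈ Ici p ∩ maxSet univ) : m ∈ Ici p ∩ Sseq P (n + 1) :=
      ⟨hm.1, maxSet_univ_subset_Sseq _ hm.2⟩
    -- `m₁` and `m₂` cannot both lie above `q ∈ Sₙ₊₁`, or they would be joined through `q`
    have hlt : (Ici q ∩ maxSet univ).ncard < (Ici p ∩ maxSet univ).ncard := by
      by_cases hq₁ : q ≤ m₁
      · refine ncard_Ici_inter_lt hP.finite_maxSet_univ hpq hm₂ fun hq₂ => hsep ?_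
        exact (ZigzagJoined.of_le hqS (hmS hm₁) hq₁).symm.trans (.of_le hqS (hmS hm₂) hq₂)
      · exact ncard_Ici_inter_lt hP.finite_maxSet_univ hpq hm₁ hq₁
    have hq_card := add_two_le_ncard_of_mem_nonconnSet hP hq.1
    omega

end

theorem Sseq_stabilizes_general {P : Type*} [PartialOrder P] (hP : AsnFin P) :
    ∃ ℓ : ℕ, ℓ ≤ (maxSet (Set.univ : Set P)).ncard - 1 ∧
      ∀ n : ℕ, ℓ ≤ n → Sseq P n = Sseq P ℓ := by
  refine ⟨_, le_rfl, Sseq_eq_of_nonconnSet_eq_empty (eq_empty_of_forall_notMem fun p hp => ?_)⟩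
  have hp_card := add_two_le_ncard_of_mem_nonconnSet hP hp
  have hM_card := ncard_le_ncard (inter_subset_right (s := Ici p)) hP.finite_maxSet_univ
  omega

/-- Under the assumptions on `P`, the chain `S₀ ⊆ S₁ ⊆ ⋯` stabilizes at some
`ℓ ≤ #(max P) − 1`. -/
theorem Sseq_stabilizes {P : Type*} [PartialOrder P] [Nonempty P] (hP : AsnFin P) :
    ∃ ℓ : ℕ, ℓ ≤ (maxSet (Set.univ : Set P)).ncard - 1 ∧
      ∀ n : ℕ, ℓ ≤ n → Sseq P n = Sseq P ℓ :=
  Sseq_stabilizes_general hP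
end

section
/- Let P satisfy the assumptions: P ⊆ ↓S for finite S ⊆ P, and every nonempty intersection of two subsets each having maximal elements has a maximal element. Define S_∞ as the union of S₀ = max P and S_{n+1} = S_n ∪ max{p : ↑p ∩ S_n not connected}. If Q ⊆ P is any subposet whose embedding G : Q ↪ P is final, then S_∞ ⊆ Q (as sets of elements). -/
open CategoryTheory

/-!
If `x ∈ S_{n+1}` were not in the image of `G`, every `G q` above `x` would lie strictly above it, so
by maximality of `x` each `↑(G q) ∩ S_n` is connected. These pieces are glued along the connected
comma category `x / G` (comparable `q`s give nested, nonempty pieces), and by finality every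
element of `↑x ∩ S_n` lies below one of them, so `↑x ∩ S_n` is connected: a contradiction.
The case `S₀ = max P` only needs that `x / G` is nonempty.
-/

section ZigzagConnected

variable {P : Type*} [Preorder P]

lemma ZigzagConnected.reflTransGen_of_subset {T U : Set P} (hT : ZigzagConnected T) (h : T ⊆ U)
    {a b : P} (ha : a ∈ T) (hb : b ∈ T) :
    Relation.ReflTransGen (fun x y : U => x.1 ≤ y.1 ∨ y.1 ≤ x.1)
      (Set.inclusion h ⟨a, ha⟩) (Set.inclusion h ⟨b, hb⟩) :=
  (hT.2 ⟨a, ha⟩ ⟨b, hb⟩).lift (Set.inclusion h) fun _ _ hr => hr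

lemma ZigzagConnected.of_subset_of_forall_le {T U : Set P} (hU : ZigzagConnected U) (hUT : U ⊆ T)
    (h : ∀ a ∈ T, ∃ b ∈ U, a ≤ b) : ZigzagConnected T := by
  refine ⟨hU.1.mono hUT, ?_⟩
  rintro ⟨a, ha⟩ ⟨b, hb⟩
  obtain ⟨a', ha'U, haa'⟩ := h a ha
  obtain ⟨b', hb'U, hbb'⟩ := h b hb
  exact .head (Or.inl haa') ((hU.reflTransGen_of_subset hUT ha'U hb'U).tail (Or.inr hbb'))

theorem ZigzagConnected.iUnion {ι : Type*} [Nonempty ι] {r : ι → ι → Prop}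
    (hι : ∀ i j, Relation.ReflTransGen r i j) {T : ι → Set P} (hT : ∀ i, ZigzagConnected (T i))
    (hr : ∀ i j, r i j → (T i ∩ T j).Nonempty) : ZigzagConnected (⋃ i, T i) := by
  refine ⟨(hT (Classical.arbitrary ι)).1.mono (Set.subset_iUnion T _), ?_⟩
  rintro ⟨a, ha⟩ ⟨b, hb⟩
  obtain ⟨i, hai⟩ := Set.mem_iUnion.1 ha
  obtain ⟨j, hbj⟩ := Set.mem_iUnion.1 hb
  induction hι i j generalizing b with
  | refl => exact (hT i).reflTransGen_of_subset (Set.subset_iUnion T i) hai hbj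
  | @tail k j _ hkj ih =>
    obtain ⟨c, hck, hcj⟩ := hr k j hkj
    exact (ih c (Set.mem_iUnion.2 ⟨k, hck⟩) hck).trans
      ((hT j).reflTransGen_of_subset (Set.subset_iUnion T j) hcj hbj)

end ZigzagConnected

section Final

variable {P Q : Type*} [PartialOrder P] [PartialOrder Q] (G : Q →o P) [G.monotone.functor.Final]

lemma exists_le_of_final (p : P) : ∃ q, p ≤ G q := by
  obtain ⟨A⟩ := (Functor.Final.out (F := G.monotone.functor) p).is_nonempty
  exact ⟨A.right, leOfHom A.hom⟩

theorem zigzagConnected_Ici_inter_of_final (x : P) (S : Set P)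
    (h : ∀ q, x ≤ G q → ZigzagConnected (Set.Ici (G q) ∩ S)) :
    ZigzagConnected (Set.Ici x ∩ S) := by
  have hpiece : ∀ A : StructuredArrow x G.monotone.functor,
      ZigzagConnected (Set.Ici (G A.right) ∩ S) := fun A => h A.right (leOfHom A.hom)
  have hnested : ∀ {A B : StructuredArrow x G.monotone.functor}, (A ⟶ B) →
      Set.Ici (G B.right) ∩ S ⊆ Set.Ici (G A.right) ∩ S := fun f _ hy =>
    ⟨(G.monotone (leOfHom f.right)).trans hy.1, hy.2⟩
  have : Nonempty (StructuredArrow x G.monotone.functor) :=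
    (Functor.Final.out (F := G.monotone.functor) x).is_nonempty
  have hunion : ZigzagConnected (⋃ A : StructuredArrow x G.monotone.functor,
      Set.Ici (G A.right) ∩ S) := by
    refine ZigzagConnected.iUnion (r := Zag) isPreconnected_zigzag hpiece ?_
    rintro A B (⟨⟨f⟩⟩ | ⟨⟨f⟩⟩)
    · obtain ⟨y, hy⟩ := (hpiece B).1
      exact ⟨y, hnested f hy, hy⟩
    · obtain ⟨y, hy⟩ := (hpiece A).1
      exact ⟨y, hy, hnested f hy⟩
  refine hunion.of_subset_of_forall_le (Set.iUnion_subset fun A y hy =>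
    ⟨(leOfHom A.hom).trans hy.1, hy.2⟩) fun a ha => ?_
  obtain ⟨q, haq⟩ := exists_le_of_final G a
  obtain ⟨y, hy⟩ := (h q (ha.1.trans haq)).1
  exact ⟨y, Set.mem_iUnion.2 ⟨StructuredArrow.mk (Y := q) (homOfLE (ha.1.trans haq)), hy⟩,
    haq.trans hy.1⟩

theorem Sseq_subset_range_of_final (n : ℕ) : Sseq P n ⊆ Set.range G := by
  induction n with
  | zero =>
    intro x hx
    obtain ⟨q, hxq⟩ := exists_le_of_final G x
    exact ⟨q, hx.2 _ trivial hxq⟩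
  | succ n ih =>
    rintro x (hx | ⟨hdisconn, hmax⟩)
    · exact ih hx
    by_contra hx
    refine hdisconn (zigzagConnected_Ici_inter_of_final G x _ fun q hxq => ?_)
    by_contra hq
    exact hx ⟨q, hmax _ hq hxq⟩

end Final

theorem Sinfty_minimal_general {P Q : Type} [PartialOrder P] [PartialOrder Q]
    (G : Q →o P) (hfinal : G.monotone.functor.Final) :
    (⋃ n, Sseq P n) ⊆ Set.range G :=
  Set.iUnion_subset (Sseq_subset_range_of_final G)

/-- Under the assumptions on `P`, if `G : Q ↪ P` is any (not necessarily full)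
subposet embedding which is a final functor, then `S_∞ ⊆ Q` (as sets of elements, i.e. every
element of `S_∞` is in the image of `G`). -/
theorem Sinfty_minimal {P Q : Type} [PartialOrder P] [PartialOrder Q] [Nonempty P]
    (hP : AsnFin P) (G : Q →o P) (hinj : Function.Injective G)
    (hfinal : G.monotone.functor.Final) :
    (⋃ n, Sseq P n) ⊆ Set.range G :=
  Sinfty_minimal_general G hfinal
end
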